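/- Let Ω be an infinite set. Then every countable subset of the symmetric inverse semigroup I_Ω is contained in a 2-generated inverse subsemigroup of I_Ω; that is, for every countable set A of partial bijections of Ω there exist partial bijections f, g of Ω such that every element of A belongs to the subsemigroup of I_Ω generated by the four elements {f, g, f⁻¹, g⁻¹}, where f⁻¹ denotes the inverse partial bijection of f. -/

import Mathlib

/-- A partial function `Ω →. Ω` is a partial bijection if it is injective on its domain. -/
def IsPartialBij {Ω : Type*} (f : Ω →. Ω) : Prop :=
  ∀ ⦃x y z : Ω⦄, z ∈ f x → z ∈ f y → x = y

/-- The symmetric inverse semigroup `I_Ω`: the type of all partial bijections of `Ω`. -/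
def PartialBij (Ω : Type*) : Type _ :=
  {f : Ω →. Ω // IsPartialBij f}

/-- Composition of partial bijections, written left-to-right: `f * g` means apply `f` first,
then `g`. -/
instance (Ω : Type*) : Semigroup (PartialBij Ω) where
  mul f g := ⟨g.1.comp f.1, by
    intro x y z hx hy
    simp only [PFun.comp_apply] at hx hy
    obtain ⟨u, hu, hzu⟩ := Part.mem_bind_iff.1 hx
    obtain ⟨v, hv, hzv⟩ := Part.mem_bind_iff.1 hy
    have huv : u = v := g.2 hzu hzv
    subst huv
    exact f.2 hu hv⟩
  mul_assoc a b c := Subtype.ext (PFun.comp_assoc c.1 b.1 a.1).symm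

/-- The inverse of a partial bijection: its domain is the range of `f`, and it sends each
point of the range of `f` back to its unique preimage. -/
noncomputable def PartialBij.inv {Ω : Type*} (f : PartialBij Ω) : PartialBij Ω :=
  ⟨fun y => ⟨∃ x, y ∈ f.1 x, fun h => Classical.choose h⟩, by
    intro y₁ y₂ z hz₁ hz₂
    obtain ⟨h₁, hz₁⟩ := hz₁
    obtain ⟨h₂, hz₂⟩ := hz₂
    have hy₁ : y₁ ∈ f.1 z := hz₁ ▸ Classical.choose_spec h₁
    have hy₂ : y₂ ∈ f.1 z := hz₂ ▸ Classical.choose_spec h₂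
    exact Part.mem_unique hy₁ hy₂⟩

/-!
Fix `e : Ω × ℕ ≃ Ω` and list the countable set as `a 0, a 1, …`; think of `e (x, k)` as the copy
of `x` at level `k`. The generator `f` sends `x` to `e (x, 0)`. The generator `g` shifts every
level `k ≥ 1` up by one, sends `e (e (x, 0), 0)` to `e (x, 1)`, and sends `e (e (x, j + 1), 0)` to
`e (e (w, j + 1), 0)` for `w = a j x`. Then `f g f⁻¹` acts as `a j` on level `j + 1`, conjugating it
by `gⁿ` gives a map acting as `a (n + j)` on level `j + 1`, and conjugating that by `f f g`, which
sends `x` to `e (x, 1)`, gives `a n` itself.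
-/

namespace PartialBij

variable {Ω : Type*}

@[ext]
lemma ext {p q : PartialBij Ω} (h : ∀ x z, z ∈ p.1 x ↔ z ∈ q.1 x) : p = q :=
  Subtype.ext <| funext fun x => Part.ext (h x)

lemma mem_mul_iff (p q : PartialBij Ω) (x z : Ω) :
    z ∈ (p * q).1 x ↔ ∃ y, y ∈ p.1 x ∧ z ∈ q.1 y :=
  Part.mem_bind_iff

lemma mem_inv_iff (p : PartialBij Ω) (y z : Ω) : z ∈ p.inv.1 y ↔ y ∈ p.1 z := by
  constructor
  · rintro ⟨h, rfl⟩
    exact Classical.choose_spec h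
  · intro hz
    have h : ∃ x, y ∈ p.1 x := ⟨z, hz⟩
    exact ⟨h, p.2 (Classical.choose_spec h) hz⟩

lemma mem_iff_eq_of_mem {p : PartialBij Ω} {x y : Ω} (h : y ∈ p.1 x) (z : Ω) :
    y ∈ p.1 z ↔ z = x :=
  ⟨fun h' => p.2 h' h, by rintro rfl; exact h⟩

lemma inv_inv (p : PartialBij Ω) : p.inv.inv = p := by
  ext x z
  rw [mem_inv_iff, mem_inv_iff]

lemma mul_inv_rev (p q : PartialBij Ω) : (p * q).inv = q.inv * p.inv := by
  ext x z
  simp only [mem_inv_iff, mem_mul_iff]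
  exact exists_congr fun y => and_comm

lemma mem_mul_mul_inv_iff {p q : PartialBij Ω} {x y : Ω} (hxy : y ∈ p.1 x) (z : Ω) :
    z ∈ (p * q * p.inv).1 x ↔ ∃ w, w ∈ q.1 y ∧ w ∈ p.1 z := by
  simp only [mem_mul_iff, mem_inv_iff]
  constructor
  · rintro ⟨w, ⟨y', hy', hw⟩, hz⟩
    exact ⟨w, Part.mem_unique hy' hxy ▸ hw, hz⟩
  · rintro ⟨w, hw, hz⟩
    exact ⟨w, ⟨y, hxy, hw⟩, hz⟩

lemma inv_mem_closure {S : Set (PartialBij Ω)} (hS : ∀ p ∈ S, p.inv ∈ S) {p : PartialBij Ω}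
    (hp : p ∈ Subsemigroup.closure S) : p.inv ∈ Subsemigroup.closure S := by
  induction hp using Subsemigroup.closure_induction with
  | mem p hp => exact Subsemigroup.subset_closure (hS p hp)
  | mul p q _ _ hp hq => exact mul_inv_rev p q ▸ mul_mem hq hp

lemma mul_mul_inv_mem_closure {S : Set (PartialBij Ω)} (hS : ∀ p ∈ S, p.inv ∈ S)
    {p q : PartialBij Ω} (hp : p ∈ Subsemigroup.closure S) (hq : q ∈ Subsemigroup.closure S) :
    p * q * p.inv ∈ Subsemigroup.closure S :=
  mul_mem (mul_mem hp hq) (inv_mem_closure hS hp)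

lemma inv_mem_of_mem_generators (f g : PartialBij Ω) :
    ∀ p ∈ ({f, g, f.inv, g.inv} : Set (PartialBij Ω)), p.inv ∈ ({f, g, f.inv, g.inv} : Set _) := by
  rintro p (rfl | rfl | rfl | rfl) <;> simp [inv_inv]

instance : Inhabited (PartialBij Ω) :=
  ⟨⟨fun _ => Part.none, fun _ _ _ h => absurd h (Part.notMem_none _)⟩⟩

def ofEmbedding (φ : Ω ↪ Ω) : PartialBij Ω :=
  ⟨fun x => Part.some (φ x), fun _ _ _ hx hy =>
    φ.injective ((Part.mem_some_iff.1 hx).symm.trans (Part.mem_some_iff.1 hy))⟩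

lemma mem_ofEmbedding_iff (φ : Ω ↪ Ω) (x z : Ω) : z ∈ (ofEmbedding φ).1 x ↔ z = φ x :=
  Part.mem_some_iff

section Construction

variable (e : Ω × ℕ ≃ Ω) (a : ℕ → PartialBij Ω)

lemma exists_eq_level_cases (y : Ω) :
    (∃ z m, y = e (z, m + 1)) ∨ (∃ x, y = e (e (x, 0), 0)) ∨ ∃ x j, y = e (e (x, j + 1), 0) := by
  obtain ⟨⟨z, _ | m⟩, rfl⟩ := e.surjective y
  · obtain ⟨⟨x, _ | j⟩, rfl⟩ := e.surjective z
    exacts [Or.inr (Or.inl ⟨x, rfl⟩), Or.inr (Or.inr ⟨x, j, rfl⟩)]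
  · exact Or.inl ⟨z, m, rfl⟩

noncomputable def codingFun : Ω →. Ω := fun y =>
  match e.symm y with
  | (z, m + 1) => Part.some (e (z, m + 2))
  | (y, 0) =>
    match e.symm y with
    | (x, 0) => Part.some (e (x, 1))
    | (x, j + 1) => ((a j).1 x).map fun w => e (e (w, j + 1), 0)

@[simp]
lemma codingFun_succ (z : Ω) (m : ℕ) :
    codingFun e a (e (z, m + 1)) = Part.some (e (z, m + 2)) := by
  simp [codingFun]

@[simp]
lemma codingFun_zero_zero (x : Ω) : codingFun e a (e (e (x, 0), 0)) = Part.some (e (x, 1)) := by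
  simp [codingFun]

@[simp]
lemma codingFun_succ_zero (x : Ω) (j : ℕ) :
    codingFun e a (e (e (x, j + 1), 0)) = ((a j).1 x).map fun w => e (e (w, j + 1), 0) := by
  simp [codingFun]

lemma isPartialBij_codingFun : IsPartialBij (codingFun e a) := by
  intro y₁ y₂ u h₁ h₂
  rcases exists_eq_level_cases e y₁ with ⟨z₁, m₁, rfl⟩ | ⟨x₁, rfl⟩ | ⟨x₁, j₁, rfl⟩ <;>
  rcases exists_eq_level_cases e y₂ with ⟨z₂, m₂, rfl⟩ | ⟨x₂, rfl⟩ | ⟨x₂, j₂, rfl⟩ <;>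
  simp only [codingFun_succ, codingFun_zero_zero, codingFun_succ_zero, Part.mem_some_iff,
    Part.mem_map_iff] at h₁ h₂
  -- the three branches land on levels `≥ 2`, `1` and `0`, and each branch is injective
  all_goals grind [EmbeddingLike.apply_eq_iff_eq, IsPartialBij]

noncomputable def coding : PartialBij Ω := ⟨codingFun e a, isPartialBij_codingFun e a⟩

def toLevelZero : PartialBij Ω :=
  ofEmbedding ((Function.Embedding.sectL Ω 0).trans e.toEmbedding)

lemma mem_toLevelZero_iff (x z : Ω) : z ∈ (toLevelZero e).1 x ↔ z = e (x, 0) :=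
  mem_ofEmbedding_iff _ x z

noncomputable def shiftedCode : ℕ → PartialBij Ω
  | 0 => toLevelZero e * coding e a * (toLevelZero e).inv
  | n + 1 => coding e a * shiftedCode n * (coding e a).inv

lemma mem_shiftedCode_iff (n j : ℕ) (x z : Ω) :
    z ∈ (shiftedCode e a n).1 (e (x, j + 1)) ↔ ∃ w ∈ (a (n + j)).1 x, z = e (w, j + 1) := by
  induction n generalizing j z with
  | zero =>
    rw [shiftedCode, mem_mul_mul_inv_iff ((mem_toLevelZero_iff e _ _).2 rfl)]
    simp [coding, mem_toLevelZero_iff, eq_comm]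
  | succ n ih =>
    have hshift (w : Ω) : e (w, j + 2) ∈ (coding e a).1 (e (w, j + 1)) := by simp [coding]
    rw [shiftedCode, mem_mul_mul_inv_iff (hshift x), Nat.add_right_comm, Nat.add_assoc]
    simp [ih, mem_iff_eq_of_mem (hshift _)]

noncomputable def entry : PartialBij Ω := toLevelZero e * toLevelZero e * coding e a

lemma mem_entry (x : Ω) : e (x, 1) ∈ (entry e a).1 x := by
  simp only [entry, mem_mul_iff, mem_toLevelZero_iff]
  exact ⟨_, ⟨_, rfl, rfl⟩, by simp [coding]⟩

lemma entry_mul_shiftedCode_mul_inv (n : ℕ) :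
    entry e a * shiftedCode e a n * (entry e a).inv = a n := by
  ext x z
  rw [mem_mul_mul_inv_iff (mem_entry e a x)]
  simp [mem_shiftedCode_iff e a n 0, mem_iff_eq_of_mem (mem_entry e a _)]

lemma mem_closure_toLevelZero_coding (n : ℕ) :
    a n ∈ Subsemigroup.closure
      {toLevelZero e, coding e a, (toLevelZero e).inv, (coding e a).inv} := by
  set S : Set (PartialBij Ω) := {toLevelZero e, coding e a, (toLevelZero e).inv, (coding e a).inv}
  have hS : ∀ p ∈ S, p.inv ∈ S := inv_mem_of_mem_generators _ _
  have hf : toLevelZero e ∈ Subsemigroup.closure S := Subsemigroup.subset_closure (by simp [S])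
  have hg : coding e a ∈ Subsemigroup.closure S := Subsemigroup.subset_closure (by simp [S])
  have hcode (m : ℕ) : shiftedCode e a m ∈ Subsemigroup.closure S := by
    induction m with
    | zero => exact mul_mul_inv_mem_closure hS hf hg
    | succ m ih => exact mul_mul_inv_mem_closure hS hg ih
  rw [← entry_mul_shiftedCode_mul_inv e a n]
  exact mul_mul_inv_mem_closure hS (mul_mem (mul_mem hf hf) hg) (hcode n)

end Construction

end PartialBij

/-- Every countable subset of the symmetric inverse semigroup `I_Ω` on an infinite set `Ω`
is contained in a 2-generated *inverse* subsemigroup of `I_Ω`, i.e. in the subsemigroup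
generated by two partial bijections together with their inverses. -/
theorem countable_subset_of_two_generated_inverse_subsemigroup_of_partialBij
    (Ω : Type*) [Infinite Ω] (A : Set (PartialBij Ω)) (hA : A.Countable) :
    ∃ f g : PartialBij Ω,
      A ⊆ (Subsemigroup.closure {f, g, f.inv, g.inv} : Subsemigroup (PartialBij Ω)) := by
  obtain ⟨e⟩ : Nonempty (Ω × ℕ ≃ Ω) := by
    rw [← Cardinal.eq, Cardinal.mk_prod, Cardinal.lift_uzero, Cardinal.mk_nat,
      Cardinal.lift_aleph0, Cardinal.mk_mul_aleph0_eq]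
  obtain ⟨a, hAa⟩ := Set.countable_iff_exists_subset_range.1 hA
  refine ⟨PartialBij.toLevelZero e, PartialBij.coding e a, hAa.trans ?_⟩
  rintro _ ⟨n, rfl⟩
  exact PartialBij.mem_closure_toLevelZero_coding e a n
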